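/- arXiv:1007.4220 — 2 statements merged into one kernel-verified Lean document; each statement's English description precedes it below -/
import Mathlib

section
/- Let U be a finite-dimensional complex vector space and g a meromorphic map from the unit disc Δ to End(U), holomorphic on the punctured disc Δ*, with g(t) invertible for t ≠ 0. Then there exist a diagonalizable endomorphism A of U with integer eigenvalues, and holomorphic maps L, R : Δ → End(U) with L(0), R(0) invertible, such that g(t) = L(t) · t^A · R(t) for all t ≠ 0, where t^A denotes the one-parameter group generated by A. -/
/-!
Write `G = t^m g`, holomorphic at `0` with `det G ≢ 0`, and reduce columns: keep
`G R = Ĝ t^k` with `R` entire of determinant one and `t^k = diagonal (t^{k_j})`. While `Ĝ 0` is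
singular, take a kernel vector `b` of `Ĝ 0` and, in its support, a pivot column `j` with `k_j`
maximal. Adding `b_l t^{k_j - k_l}` times column `l` to column `j` is an entire unimodular column
operation after which column `j` of `Ĝ` vanishes at `0`; so a factor `t` moves from column `j` of
`Ĝ` into `t^{k_j}`, and the order of `det Ĝ` at `0` drops by one. When it reaches zero, `Ĝ 0` is
invertible, and `L = g R t^{-λ}` with `λ = k - m` extends holomorphically over `0` by `Ĝ`.
-/

open Matrix Filter Topology Metric

namespace Matrix

variable {ι R K : Type*} [Fintype ι] [DecidableEq ι] [CommRing R] [Field K]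

theorem det_updateCol_one (j : ι) (c : ι → R) : (updateCol (1 : Matrix ι ι R) j c).det = c j := by
  rw [← cramer_apply, cramer_one]
  rfl

theorem updateCol_mul_diagonal (M : Matrix ι ι R) (j : ι) (c d : ι → R) :
    updateCol M j c * diagonal d = updateCol (M * diagonal d) j (d j • c) := by
  ext i l
  by_cases hl : l = j
  · subst hl; simp [mul_comm]
  · simp [hl]

theorem exists_mulVec_eq_zero_with_pivot {M : Matrix ι ι K} (hM : M.det = 0) (k : ι → ℕ) :
    ∃ (b : ι → K) (j : ι), b j = 1 ∧ (∀ l, b l ≠ 0 → k l ≤ k j) ∧ M *ᵥ b = 0 := by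
  classical
  obtain ⟨a, ha, hMa⟩ := exists_mulVec_eq_zero_iff.mpr hM
  have hsupp : (Finset.univ.filter (a · ≠ 0)).Nonempty := by
    obtain ⟨l, hl⟩ := Function.ne_iff.mp ha
    exact ⟨l, by simpa using hl⟩
  obtain ⟨j, hj, hmax⟩ := Finset.exists_max_image _ k hsupp
  have haj : a j ≠ 0 := by simpa using hj
  refine ⟨(a j)⁻¹ • a, j, by simp [haj], fun l hl => hmax l ?_, by rw [mulVec_smul, hMa, smul_zero]⟩
  simpa [haj] using hl

end Matrix

section

variable {𝕜 : Type*} [NontriviallyNormedField 𝕜] {ι : Type*} [Fintype ι]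

theorem analyticOrderAt_ne_top_of_eventually_ne_zero {E : Type*} [NormedAddCommGroup E]
    [NormedSpace 𝕜 E] {f : 𝕜 → E} {z : 𝕜}
    (hf : ∀ᶠ t in 𝓝[≠] z, f t ≠ 0) : analyticOrderAt f z ≠ ⊤ := fun htop =>
  let ⟨_, ht0, ht⟩ :=
    ((analyticOrderAt_eq_top.mp htop).filter_mono nhdsWithin_le_nhds |>.and hf).exists
  ht ht0

theorem exists_eventuallyEq_smul_of_apply_eq_zero {v : 𝕜 → ι → 𝕜}
    (hv : ∀ i, AnalyticAt 𝕜 (fun s => v s i) 0) (hv0 : v 0 = 0) :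
    ∃ w : 𝕜 → ι → 𝕜, (∀ i, AnalyticAt 𝕜 (fun s => w s i) 0) ∧ ∀ᶠ s in 𝓝 0, v s = s • w s := by
  have hord : ∀ i, ((1 : ℕ) : ℕ∞) ≤ analyticOrderAt (fun s => v s i) 0 := fun i => by
    rw [Nat.cast_one, Order.one_le_iff_ne_zero, Ne, analyticOrderAt_eq_zero]
    simp [hv i, hv0]
  choose w hw hvw using fun i => (natCast_le_analyticOrderAt (hv i)).mp (hord i)
  refine ⟨fun s i => w i s, hw, ?_⟩
  filter_upwards [eventually_all.mpr hvw] with s hs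
  ext i
  simpa using hs i

variable [DecidableEq ι]

theorem analyticAt_det {A : 𝕜 → Matrix ι ι 𝕜} {z : 𝕜}
    (hA : ∀ i j, AnalyticAt 𝕜 (fun s => A s i j) z) : AnalyticAt 𝕜 (fun s => (A s).det) z := by
  simp only [det_apply, Units.smul_def, zsmul_eq_mul]
  fun_prop

theorem differentiable_det {A : 𝕜 → Matrix ι ι 𝕜}
    (hA : ∀ i j, Differentiable 𝕜 fun s => A s i j) : Differentiable 𝕜 fun s => (A s).det := by
  simp only [det_apply, Units.smul_def, zsmul_eq_mul]
  fun_prop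

theorem differentiable_inv_apply_of_det_eq_one {A : 𝕜 → Matrix ι ι 𝕜}
    (hA : ∀ i j, Differentiable 𝕜 fun s => A s i j) (hdet : ∀ s, (A s).det = 1) (i j : ι) :
    Differentiable 𝕜 fun s => (A s)⁻¹ i j := by
  simp only [inv_def, hdet, Ring.inverse_one, one_smul, adjugate_apply]
  refine differentiable_det fun k l => ?_
  simp only [updateRow_apply]
  split_ifs <;> fun_prop

theorem exists_unimodular_diagonal_mul_eq_updateCol (k : ι → ℕ) (j : ι) (b : ι → 𝕜)
    (hbj : b j = 1) (hbk : ∀ l, b l ≠ 0 → k l ≤ k j) :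
    ∃ E : 𝕜 → Matrix ι ι 𝕜, (∀ i l, Differentiable 𝕜 fun s => E s i l) ∧ (∀ s, (E s).det = 1) ∧
      ∀ s, diagonal (fun i => s ^ k i) * E s =
        updateCol (diagonal fun i => s ^ k i) j (s ^ k j • b) := by
  refine ⟨fun s => updateCol 1 j (fun l => b l * s ^ (k j - k l)), fun i l => ?_, fun s => ?_,
    fun s => ?_⟩
  · simp only [updateCol_apply]
    split_ifs <;> fun_prop
  · rw [det_updateCol_one, hbj, Nat.sub_self, pow_zero, mul_one]
  · rw [mul_updateCol, mul_one]
    congr 1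
    ext l
    rw [mulVec_diagonal]
    by_cases hl : b l = 0
    · simp [hl]
    · rw [Pi.smul_apply, smul_eq_mul, mul_left_comm, ← pow_add, Nat.add_sub_cancel' (hbk l hl),
        mul_comm]

theorem exists_column_reduction_step {G : 𝕜 → Matrix ι ι 𝕜}
    (hG : ∀ i j, AnalyticAt 𝕜 (fun s => G s i j) 0) (hG0 : (G 0).det = 0) (k : ι → ℕ) :
    ∃ (E G' : 𝕜 → Matrix ι ι 𝕜) (k' : ι → ℕ), (∀ i j, Differentiable 𝕜 fun s => E s i j) ∧
      (∀ s, (E s).det = 1) ∧ (∀ i j, AnalyticAt 𝕜 (fun s => G' s i j) 0) ∧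
      (∀ᶠ s in 𝓝 0, (G s).det = s * (G' s).det) ∧
      ∀ᶠ s in 𝓝 0,
        G s * diagonal (fun i => s ^ k i) * E s = G' s * diagonal (fun i => s ^ k' i) := by
  obtain ⟨b, j, hbj, hbk, hGb⟩ := exists_mulVec_eq_zero_with_pivot hG0 k
  obtain ⟨E, hE, hEdet, hDE⟩ := exists_unimodular_diagonal_mul_eq_updateCol k j b hbj hbk
  obtain ⟨w, hw, hGbw⟩ := exists_eventuallyEq_smul_of_apply_eq_zero (v := fun s => G s *ᵥ b)
    (fun i => by simp only [mulVec, dotProduct]; fun_prop) hGb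
  refine ⟨E, fun s => updateCol (G s) j (w s), Function.update k j (k j + 1), hE, hEdet,
    fun i l => ?_, ?_, ?_⟩
  · simp only [updateCol_apply]
    split_ifs
    exacts [hw i, hG i l]
  · filter_upwards [hGbw] with s hs
    calc (G s).det = (G s * updateCol 1 j b).det := by rw [det_mul, det_updateCol_one, hbj, mul_one]
      _ = s * (updateCol (G s) j (w s)).det := by
        rw [mul_updateCol, mul_one, hs, det_updateCol_smul]
  · filter_upwards [hGbw] with s hs
    rw [mul_assoc, hDE, mul_updateCol, mulVec_smul, hs, updateCol_mul_diagonal]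
    ext i l
    by_cases hl : l = j
    · subst hl; simp [smul_smul, pow_succ]
    · simp [hl]

theorem exists_unimodular_mul_diagonal_mul_eq_of_analyticOrderAt_eq {d : ℕ}
    {G : 𝕜 → Matrix ι ι 𝕜} (k : ι → ℕ) (hG : ∀ i j, AnalyticAt 𝕜 (fun s => G s i j) 0)
    (hord : analyticOrderAt (fun s => (G s).det) 0 = d) :
    ∃ (R H : 𝕜 → Matrix ι ι 𝕜) (k' : ι → ℕ), (∀ i j, Differentiable 𝕜 fun s => R s i j) ∧
      (∀ s, (R s).det = 1) ∧ (∀ i j, AnalyticAt 𝕜 (fun s => H s i j) 0) ∧ IsUnit (H 0) ∧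
      ∀ᶠ s in 𝓝 0,
        G s * diagonal (fun i => s ^ k i) * R s = H s * diagonal (fun i => s ^ k' i) := by
  induction d generalizing G k with
  | zero =>
    have hdet : (G 0).det ≠ 0 := by
      simpa [analyticAt_det hG] using analyticOrderAt_eq_zero.mp hord
    exact ⟨fun _ => 1, G, k, fun i j => differentiable_const _, fun _ => det_one, hG,
      (isUnit_iff_isUnit_det _).mpr hdet.isUnit, by simp⟩
  | succ d ih =>
    obtain ⟨E, G', k', hE, hEdet, hG', hdet, hGE⟩ := exists_column_reduction_step hG
      (apply_eq_zero_of_analyticOrderAt_ne_zero (f := fun s => (G s).det) (by simp [hord])) k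
    have hord' : analyticOrderAt (fun s => (G' s).det) 0 = d := by
      have h := (analyticOrderAt_congr hdet).symm.trans hord
      rw [show (fun s => s * (G' s).det) = id * fun s => (G' s).det from rfl,
        analyticOrderAt_mul analyticAt_id (analyticAt_det hG'), analyticOrderAt_id, Nat.cast_succ,
        add_comm] at h
      exact (WithTop.add_right_inj WithTop.one_ne_top).mp h
    obtain ⟨R, H, k'', hR, hRdet, hH, hH0, hGRH⟩ := ih k' hG' hord'
    refine ⟨fun s => E s * R s, H, k'', fun i j => ?_, fun s => by simp [hEdet, hRdet], hH, hH0, ?_⟩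
    · simp only [mul_apply]
      fun_prop
    · filter_upwards [hGE, hGRH] with s hs hs'
      rw [← mul_assoc, hs, hs']

theorem exists_unimodular_mul_eq_mul_diagonal {G : 𝕜 → Matrix ι ι 𝕜}
    (hG : ∀ i j, AnalyticAt 𝕜 (fun s => G s i j) 0)
    (hdet : analyticOrderAt (fun s => (G s).det) 0 ≠ ⊤) :
    ∃ (R H : 𝕜 → Matrix ι ι 𝕜) (k : ι → ℕ), (∀ i j, Differentiable 𝕜 fun s => R s i j) ∧
      (∀ s, (R s).det = 1) ∧ (∀ i j, AnalyticAt 𝕜 (fun s => H s i j) 0) ∧ IsUnit (H 0) ∧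
      ∀ᶠ s in 𝓝 0, G s * R s = H s * diagonal (fun i => s ^ k i) := by
  obtain ⟨d, hd⟩ := ENat.ne_top_iff_exists.mp hdet
  simpa using exists_unimodular_mul_diagonal_mul_eq_of_analyticOrderAt_eq 0 hG hd.symm

theorem exists_differentiableOn_mul_diagonal_eq {U : Set 𝕜} (hU : IsOpen U)
    {G R H : 𝕜 → Matrix ι ι 𝕜} {k : ι → ℕ}
    (hG : ∀ i j, DifferentiableOn 𝕜 (fun t => G t i j) U)
    (hR : ∀ i j, Differentiable 𝕜 fun s => R s i j) (hH : ∀ i j, AnalyticAt 𝕜 (fun s => H s i j) 0)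
    (hGRH : ∀ᶠ s in 𝓝 0, G s * R s = H s * diagonal (fun i => s ^ k i)) :
    ∃ L : 𝕜 → Matrix ι ι 𝕜, (∀ i j, DifferentiableOn 𝕜 (fun t => L t i j) U) ∧ L 0 = H 0 ∧
      ∀ t ≠ 0, L t * diagonal (fun i => t ^ k i) = G t * R t := by
  classical
  set L : 𝕜 → Matrix ι ι 𝕜 := fun s =>
    if s = 0 then H 0 else G s * R s * diagonal (fun i => s ^ (-(k i : ℤ))) with hL
  have hinv : ∀ s : 𝕜, s ≠ 0 → ∀ i, s ^ k i * s ^ (-(k i : ℤ)) = 1 := fun s hs i => by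
    rw [← zpow_natCast, ← zpow_add₀ hs, add_neg_cancel, zpow_zero]
  have hLH : ∀ᶠ s in 𝓝 0, L s = H s := by
    filter_upwards [hGRH] with s hs
    by_cases hs0 : s = 0
    · simp [hL, hs0]
    · rw [hL]
      dsimp only
      rw [if_neg hs0, hs, mul_assoc, diagonal_mul_diagonal]
      simp only [hinv s hs0, diagonal_one, mul_one]
  refine ⟨L, fun i j t ht => ?_, if_pos rfl, fun t ht => ?_⟩
  · by_cases ht0 : t = 0
    · subst ht0
      have hLHij : (fun s => L s i j) =ᶠ[𝓝 0] fun s => H s i j :=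
        hLH.mono fun s hs => congrArg (· i j) hs
      exact (hLHij.differentiableAt_iff.mpr (hH i j).differentiableAt).differentiableWithinAt
    · have hLt : (fun s => L s i j) =ᶠ[𝓝 t]
          fun s => (G s * R s * diagonal (fun i => s ^ (-(k i : ℤ)))) i j :=
        (eventually_ne_nhds ht0).mono fun s hs => by simp [hL, hs]
      have hGt : ∀ i j, DifferentiableAt 𝕜 (fun s => G s i j) t :=
        fun i j => (hG i j).differentiableAt (hU.mem_nhds ht)
      refine (hLt.differentiableAt_iff.mpr ?_).differentiableWithinAt
      simp only [mul_diagonal]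
      simp only [mul_apply]
      fun_prop (disch := exact Or.inl ht0)
  · simp only [hL, ht, if_false, mul_assoc, diagonal_mul_diagonal, mul_comm (_ ^ (-_ : ℤ)),
      hinv t ht, diagonal_one, mul_one]

end

/-- `U = ℂⁿ`, and `A` is taken diagonal: conjugating a diagonalizable `A` into diagonal form only
changes `L` and `R`. -/
theorem stmt_0_general (n : ℕ) (g : ℂ → Matrix (Fin n) (Fin n) ℂ)
    (mero : ∃ (m : ℕ) (G : ℂ → Matrix (Fin n) (Fin n) ℂ),
      (∀ i j, DifferentiableOn ℂ (fun t => G t i j) (ball (0:ℂ) 1)) ∧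
      ∀ t ∈ ball (0:ℂ) 1, t ≠ 0 → G t = t ^ m • g t)
    (inv : ∀ t ∈ ball (0:ℂ) 1, t ≠ 0 → IsUnit (g t)) :
    ∃ (lam : Fin n → ℤ) (L R : ℂ → Matrix (Fin n) (Fin n) ℂ),
      (∀ i j, DifferentiableOn ℂ (fun t => L t i j) (ball (0:ℂ) 1)) ∧
      (∀ i j, DifferentiableOn ℂ (fun t => R t i j) (ball (0:ℂ) 1)) ∧
      IsUnit (L 0) ∧ IsUnit (R 0) ∧
      ∀ t ∈ ball (0:ℂ) 1, t ≠ 0 →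
        g t = L t * Matrix.diagonal (fun i => t ^ (lam i)) * R t := by
  obtain ⟨m, G, hG, hGg⟩ := mero
  have hball : ball (0:ℂ) 1 ∈ 𝓝 0 := ball_mem_nhds 0 one_pos
  have hGdet : ∀ᶠ t in 𝓝[≠] 0, (G t).det ≠ 0 := by
    filter_upwards [self_mem_nhdsWithin, nhdsWithin_le_nhds hball] with t ht0 ht
    rw [hGg t ht ht0, det_smul]
    exact mul_ne_zero (pow_ne_zero _ (pow_ne_zero m ht0))
      ((isUnit_iff_isUnit_det _).mp (inv t ht ht0)).ne_zero
  obtain ⟨R, H, k, hR, hRdet, hH, hH0, hGRH⟩ := exists_unimodular_mul_eq_mul_diagonal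
    (fun i j => (hG i j).analyticAt hball) (analyticOrderAt_ne_top_of_eventually_ne_zero hGdet)
  obtain ⟨L, hL, hL0, hLG⟩ := exists_differentiableOn_mul_diagonal_eq isOpen_ball hG hR hH hGRH
  refine ⟨fun i => k i - m, L, fun t => (R t)⁻¹, hL,
    fun i j => (differentiable_inv_apply_of_det_eq_one hR hRdet i j).differentiableOn, hL0 ▸ hH0,
    (isUnit_iff_isUnit_det _).mpr (by simp [hRdet]), fun t ht ht0 => ?_⟩
  have hdiag : diagonal (fun i => t ^ ((k i : ℤ) - m)) =
      (t ^ m)⁻¹ • diagonal (fun i => t ^ k i) := by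
    rw [← diagonal_smul]
    congr 1
    ext i
    rw [zpow_sub₀ ht0, zpow_natCast, zpow_natCast, div_eq_inv_mul, Pi.smul_apply, smul_eq_mul]
  dsimp only
  rw [hdiag, mul_smul_comm, smul_mul, hLG t ht0, hGg t ht ht0, smul_mul, smul_mul,
    mul_nonsing_inv_cancel_right _ _ (by simp [hRdet]), smul_smul,
    inv_mul_cancel₀ (pow_ne_zero m ht0), one_smul]

/-- **Meromorphic Birkhoff/Smith factorization** (Proposition 2 of the paper).
If `g` is a meromorphic map from the unit disc to `End(U)` (here `U = ℂⁿ`,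
endomorphisms represented as matrices), holomorphic on the punctured disc with
`g t` invertible for `t ≠ 0`, then `g t = L t * t^A * R t` where `A` is a
diagonalizable endomorphism with integer eigenvalues `lam i` (realized as the
diagonal matrix with entries `lam i`, so `t^A` is the diagonal matrix with
entries `t ^ lam i`), and `L, R` are holomorphic across `0` with `L 0`, `R 0`
invertible. -/
theorem stmt_0 (n : ℕ) (g : ℂ → Matrix (Fin n) (Fin n) ℂ)
    (hol : ∀ i j, DifferentiableOn ℂ (fun t => g t i j) (ball (0:ℂ) 1 \ {0}))
    (mero : ∃ (m : ℕ) (G : ℂ → Matrix (Fin n) (Fin n) ℂ),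
      (∀ i j, DifferentiableOn ℂ (fun t => G t i j) (ball (0:ℂ) 1)) ∧
      ∀ t ∈ ball (0:ℂ) 1, t ≠ 0 → G t = t ^ m • g t)
    (inv : ∀ t ∈ ball (0:ℂ) 1, t ≠ 0 → IsUnit (g t)) :
    ∃ (lam : Fin n → ℤ) (L R : ℂ → Matrix (Fin n) (Fin n) ℂ),
      (∀ i j, DifferentiableOn ℂ (fun t => L t i j) (ball (0:ℂ) 1)) ∧
      (∀ i j, DifferentiableOn ℂ (fun t => R t i j) (ball (0:ℂ) 1)) ∧
      IsUnit (L 0) ∧ IsUnit (R 0) ∧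
      ∀ t ∈ ball (0:ℂ) 1, t ≠ 0 →
        g t = L t * Matrix.diagonal (fun i => t ^ (lam i)) * R t :=
  stmt_0_general n g mero inv
end

section
/- Let V be a finite-dimensional complex representation of C*, decomposed as V = ⊕_μ V_μ where t ∈ C* acts as t^{-μ} on V_μ. Let x̂ ∈ V be nonzero and let μ̄ be the largest μ such that the component of x̂ in V_μ is nonzero. Let R : Δ → GL(V) be holomorphic with R(0) = Id, and suppose that Γ(t) = t^A · R(t) · x̂ (where t^A acts as t^{-μ} on V_μ) extends meromorphically across t = 0 with limit point in P(V) represented by ŷ ∈ V. Then: (a) the order of pole ν of Γ at 0 satisfies ν ≥ μ̄; (b) the components y_μ of ŷ vanish for all μ < μ̄; and (c) if μ₁ denotes the smallest μ with y_μ ≠ 0, then ν ≤ μ₁. -/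
/-!
Near `t = 0` each coordinate satisfies `Fᵢ(t) = t^(ν - wᵢ) · (R(t) x̂)ᵢ`, where both `Fᵢ` and
`(R(t) x̂)ᵢ` are continuous at `0` and `(R(0) x̂)ᵢ = x̂ᵢ`. If `wᵢ < ν` the right side tends to `0`,
so `ŷᵢ = Fᵢ(0) = 0`; if `wᵢ > ν`, then `(R(t) x̂)ᵢ = t^(wᵢ - ν) Fᵢ(t)` tends to `0`, so `x̂ᵢ = 0`.
Hence every weight carried by `x̂` is `≤ ν`, and every weight carried by `ŷ` is `≥ ν`.
-/

open Metric Finset Filter Topology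

section ZpowSmul

variable {𝕜 E : Type*} [NontriviallyNormedField 𝕜] [NormedAddCommGroup E] [NormedSpace 𝕜 E]
  {p q : 𝕜 → E} {k : ℤ}

theorem eq_zero_of_eventually_eq_zpow_smul (hp : ContinuousAt p 0) (hq : ContinuousAt q 0)
    (hk : 0 < k) (h : ∀ᶠ t in 𝓝[≠] 0, p t = t ^ k • q t) : p 0 = 0 := by
  have hcont : ContinuousAt (fun t : 𝕜 => t ^ k • q t) 0 :=
    (continuousAt_zpow₀ 0 k (Or.inr hk.le)).smul hq
  rw [((hp.eventuallyEq_nhds_iff_eventuallyEq_nhdsNE hcont).mp h).eq_of_nhds,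
    zero_zpow k hk.ne', zero_smul]

theorem eq_zero_of_eventually_eq_zpow_smul_of_neg (hp : ContinuousAt p 0)
    (hq : ContinuousAt q 0) (hk : k < 0) (h : ∀ᶠ t in 𝓝[≠] 0, p t = t ^ k • q t) : q 0 = 0 := by
  refine eq_zero_of_eventually_eq_zpow_smul hq hp (neg_pos.mpr hk) ?_
  filter_upwards [h, self_mem_nhdsWithin] with t hpt ht
  rw [hpt, smul_smul, ← zpow_add₀ ht, neg_add_cancel, zpow_zero, one_smul]

end ZpowSmul

theorem stmt_4_general (n : ℕ) (w : Fin n → ℤ) (xhat : Fin n → ℂ)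
    (hS : (univ.filter fun i => xhat i ≠ 0).Nonempty)
    (R : ℂ → Matrix (Fin n) (Fin n) ℂ)
    (hR : ∀ i j, DifferentiableOn ℂ (fun t => R t i j) (ball (0:ℂ) 1))
    (hR0 : R 0 = 1)
    (Γ : ℂ → Fin n → ℂ)
    (hΓ : ∀ t : ℂ, t ≠ 0 → Γ t = fun i => t ^ (-(w i)) * ((R t).mulVec xhat) i)
    (ν : ℤ) (F : ℂ → Fin n → ℂ)
    (hF : ∀ i, DifferentiableOn ℂ (fun t => F t i) (ball (0:ℂ) 1))
    (hFΓ : ∀ t ∈ ball (0:ℂ) 1, t ≠ 0 → F t = t ^ ν • Γ t)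
    (yhat : Fin n → ℂ) (hy : yhat = F 0)
    (μbar : ℤ) (hμbar : μbar = (univ.filter fun i => xhat i ≠ 0).sup' hS w) :
    (μbar ≤ ν) ∧
    (∀ i, w i < μbar → yhat i = 0) ∧
    (∀ hT : (univ.filter fun i => yhat i ≠ 0).Nonempty,
      ν ≤ (univ.filter fun i => yhat i ≠ 0).inf' hT w) := by
  have hball : ball (0:ℂ) 1 ∈ 𝓝 0 := ball_mem_nhds 0 one_pos
  have hRx : ∀ i, ContinuousAt (fun t => (R t).mulVec xhat i) 0 := fun i =>
    show ContinuousAt (fun t => ∑ j, R t i j * xhat j) 0 from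
      tendsto_finsetSum _ fun j _ => ((hR i j).continuousOn.continuousAt hball).fun_mul
        continuousAt_const
  have hFi : ∀ i, ContinuousAt (fun t => F t i) 0 := fun i =>
    (hF i).continuousOn.continuousAt hball
  have hweight : ∀ i, ∀ᶠ t in 𝓝[≠] 0, F t i = t ^ (ν - w i) • (R t).mulVec xhat i := by
    intro i
    filter_upwards [nhdsWithin_le_nhds hball, self_mem_nhdsWithin] with t htb ht
    rw [hFΓ t htb ht, hΓ t ht, Pi.smul_apply, smul_eq_mul, smul_eq_mul, ← mul_assoc,
      ← zpow_add₀ ht, sub_eq_add_neg]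
  have hy_zero : ∀ i, w i < ν → yhat i = 0 := fun i hi => hy ▸
    eq_zero_of_eventually_eq_zpow_smul (hFi i) (hRx i) (sub_pos.mpr hi) (hweight i)
  have hx_zero : ∀ i, ν < w i → xhat i = 0 := fun i hi => by
    simpa [hR0] using
      eq_zero_of_eventually_eq_zpow_smul_of_neg (hFi i) (hRx i) (sub_neg.mpr hi) (hweight i)
  have hμbar_le : μbar ≤ ν := hμbar ▸ sup'_le _ _ fun i hi =>
    not_lt.mp fun hlt => (mem_filter.mp hi).2 (hx_zero i hlt)
  refine ⟨hμbar_le, fun i hi => hy_zero i (hi.trans_le hμbar_le), fun hT => ?_⟩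
  exact le_inf' _ _ fun i hi => not_lt.mp fun hlt => (mem_filter.mp hi).2 (hy_zero i hlt)

/-- **The key computation in the proof of Lemma 1 of the paper.**
`V = ℂⁿ` decomposes into weight spaces for `ℂ*`, with `t` acting as `t^{-w i}`
on the `i`-th coordinate line.  Let `x̂ ≠ 0`, let `μ̄` be the largest weight
`w i` over coordinates where `x̂` is nonzero, let `R : Δ → GL(V)` be holomorphic
with `R 0 = Id`, and suppose `Γ(t) = t^A · R(t) · x̂` has pole order `ν` at `0`
(witnessed by the holomorphic extension `F` of `t^ν • Γ`, with limit
representative `ŷ = F 0 ≠ 0`).  Then (a) `ν ≥ μ̄`; (b) `ŷᵢ = 0` whenever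
`w i < μ̄`; (c) `ν ≤ μ₁`, the smallest weight over coordinates where `ŷ` is
nonzero. -/
theorem stmt_4 (n : ℕ) (w : Fin n → ℤ) (xhat : Fin n → ℂ) (hx : xhat ≠ 0)
    (hS : (univ.filter fun i => xhat i ≠ 0).Nonempty)
    (R : ℂ → Matrix (Fin n) (Fin n) ℂ)
    (hR : ∀ i j, DifferentiableOn ℂ (fun t => R t i j) (ball (0:ℂ) 1))
    (hR0 : R 0 = 1)
    (Γ : ℂ → Fin n → ℂ)
    (hΓ : ∀ t : ℂ, t ≠ 0 → Γ t = fun i => t ^ (-(w i)) * ((R t).mulVec xhat) i)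
    (ν : ℤ) (F : ℂ → Fin n → ℂ)
    (hF : ∀ i, DifferentiableOn ℂ (fun t => F t i) (ball (0:ℂ) 1))
    (hFΓ : ∀ t ∈ ball (0:ℂ) 1, t ≠ 0 → F t = t ^ ν • Γ t)
    (yhat : Fin n → ℂ) (hy : yhat = F 0) (hy0 : yhat ≠ 0)
    (μbar : ℤ) (hμbar : μbar = (univ.filter fun i => xhat i ≠ 0).sup' hS w) :
    (μbar ≤ ν) ∧
    (∀ i, w i < μbar → yhat i = 0) ∧
    (∀ hT : (univ.filter fun i => yhat i ≠ 0).Nonempty,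
      ν ≤ (univ.filter fun i => yhat i ≠ 0).inf' hT w) :=
  stmt_4_general n w xhat hS R hR hR0 Γ hΓ ν F hF hFΓ yhat hy μbar hμbar
end
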